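/- arXiv:2601.17316 — 7 statements merged into one kernel-verified Lean document; each statement's English description precedes it below -/
import Mathlib

section
/- Let X and Y be Banach spaces and T : X → Y a bounded linear operator with m(T) = 0, where m(T) = inf{‖Tx‖ : x ∈ S_X}. Then for every ε > 0 there exists a rank-one operator K : X → Y with ‖K‖ < ε such that S = T − K satisfies m(S) = 0 and S attains its minimum modulus. -/
open Filter Topology

noncomputable def minMod {X Y : Type*} [NormedAddCommGroup X] [NormedSpace ℝ X]
    [NormedAddCommGroup Y] [NormedSpace ℝ Y] (T : X →L[ℝ] Y) : ℝ :=
  sInf {r : ℝ | ∃ x : X, ‖x‖ = 1 ∧ ‖T x‖ = r}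

def WeaklyNull {X : Type*} [NormedAddCommGroup X] [NormedSpace ℝ X] (x : ℕ → X) : Prop :=
  ∀ f : X →L[ℝ] ℝ, Tendsto (fun n => f (x n)) atTop (𝓝 0)

def AttainsMinMod {X Y : Type*} [NormedAddCommGroup X] [NormedSpace ℝ X]
    [NormedAddCommGroup Y] [NormedSpace ℝ Y] (T : X →L[ℝ] Y) : Prop :=
  ∃ x : X, ‖x‖ = 1 ∧ ‖T x‖ = minMod T

def PairPropM (X Y : Type*) [NormedAddCommGroup X] [NormedSpace ℝ X]
    [NormedAddCommGroup Y] [NormedSpace ℝ Y] : Prop :=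
  ∀ T : X →L[ℝ] Y, 1 ≤ minMod T →
    ∀ (x : X) (y : Y), ‖x‖ ≤ ‖y‖ → ∀ xs : ℕ → X, WeaklyNull xs →
      limsup (fun n => ‖x + xs n‖) atTop ≤ limsup (fun n => ‖y + T (xs n)‖) atTop

def PairPropO (X Y : Type*) [NormedAddCommGroup X] [NormedSpace ℝ X]
    [NormedAddCommGroup Y] [NormedSpace ℝ Y] : Prop :=
  ∀ T : X →L[ℝ] Y, 1 ≤ minMod T →
    ∀ y : Y, y ≠ 0 → ∀ xs : ℕ → X, WeaklyNull xs →
      limsup (fun n => ‖xs n‖) atTop < limsup (fun n => ‖y + T (xs n)‖) atTop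

def PropertyM (X : Type*) [NormedAddCommGroup X] [NormedSpace ℝ X] : Prop :=
  ∀ x y : X, ‖y‖ ≤ ‖x‖ → ∀ xs : ℕ → X, WeaklyNull xs →
    limsup (fun n => ‖y + xs n‖) atTop ≤ limsup (fun n => ‖x + xs n‖) atTop

def OpialProperty (X : Type*) [NormedAddCommGroup X] [NormedSpace ℝ X] : Prop :=
  ∀ x : X, x ≠ 0 → ∀ xs : ℕ → X, WeaklyNull xs →
    limsup (fun n => ‖xs n‖) atTop < limsup (fun n => ‖x + xs n‖) atTop

def WeakMinimizingProperty (X Y : Type*) [NormedAddCommGroup X] [NormedSpace ℝ X]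
    [NormedAddCommGroup Y] [NormedSpace ℝ Y] : Prop :=
  ∀ T : X →L[ℝ] Y,
    (∃ xs : ℕ → X, (∀ n, ‖xs n‖ = 1) ∧
      Tendsto (fun n => ‖T (xs n)‖) atTop (𝓝 (minMod T)) ∧ ¬ WeaklyNull xs) →
    AttainsMinMod T

/-! The hypothesis provides a unit vector `x₀` with `‖T x₀‖ < ε`. Subtracting the rank-one operator
`x ↦ f x • T x₀`, where `f` is a norm-one functional with `f x₀ = 1` (Hahn–Banach), kills `x₀`
and costs exactly `‖T x₀‖` in norm; an operator vanishing on a unit vector has minimum modulus `0`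
and attains it there. -/

section MinMod

variable {X Y : Type*} [NormedAddCommGroup X] [NormedSpace ℝ X]
  [NormedAddCommGroup Y] [NormedSpace ℝ Y] {T : X →L[ℝ] Y}

theorem minMod_nonneg : 0 ≤ minMod T :=
  Real.sInf_nonneg <| by
    rintro _ ⟨x, -, rfl⟩
    exact norm_nonneg _

theorem minMod_eq_zero_of_apply_eq_zero {x : X} (hx : ‖x‖ = 1) (hTx : T x = 0) :
    minMod T = 0 := by
  refine le_antisymm (csInf_le ?_ ⟨x, hx, by rw [hTx, norm_zero]⟩) minMod_nonneg
  refine ⟨0, ?_⟩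
  rintro _ ⟨y, -, rfl⟩
  exact norm_nonneg _

theorem attainsMinMod_of_apply_eq_zero {x : X} (hx : ‖x‖ = 1) (hTx : T x = 0) :
    AttainsMinMod T :=
  ⟨x, hx, by rw [hTx, norm_zero, minMod_eq_zero_of_apply_eq_zero hx hTx]⟩

theorem exists_norm_eq_one_norm_apply_lt [Nontrivial X] {ε : ℝ} (h : minMod T < ε) :
    ∃ x : X, ‖x‖ = 1 ∧ ‖T x‖ < ε := by
  obtain ⟨x, hx⟩ := exists_norm_eq X zero_le_one
  obtain ⟨_, ⟨y, hy, rfl⟩, hyε⟩ := exists_lt_of_csInf_lt (s := {r | ∃ x : X, ‖x‖ = 1 ∧ ‖T x‖ = r})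
    ⟨‖T x‖, x, hx, rfl⟩ h
  exact ⟨y, hy, hyε⟩

end MinMod

theorem exists_smulRight_apply_eq_norm_eq {𝕜 X Y : Type*} [RCLike 𝕜]
    [NormedAddCommGroup X] [NormedSpace 𝕜 X] [NormedAddCommGroup Y] [NormedSpace 𝕜 Y]
    {x : X} (hx : ‖x‖ = 1) (y : Y) :
    ∃ f : StrongDual 𝕜 X, f.smulRight y x = y ∧ ‖f.smulRight y‖ = ‖y‖ := by
  obtain ⟨f, hf, hfx⟩ := exists_dual_vector 𝕜 x (by rw [hx]; exact one_ne_zero)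
  refine ⟨f, ?_, ?_⟩
  · simp [hfx, hx]
  · rw [ContinuousLinearMap.norm_smulRight_apply, hf, one_mul]

theorem stmt0_general {X Y : Type*} [NormedAddCommGroup X] [NormedSpace ℝ X]
    [NormedAddCommGroup Y] [NormedSpace ℝ Y] [Nontrivial X]
    (T : X →L[ℝ] Y) (hT : minMod T = 0) :
    ∀ ε : ℝ, 0 < ε → ∃ K : X →L[ℝ] Y,
      (∃ (f : X →L[ℝ] ℝ) (y : Y), ∀ x : X, K x = f x • y) ∧
      ‖K‖ < ε ∧ minMod (T - K) = 0 ∧ AttainsMinMod (T - K) := by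
  intro ε hε
  obtain ⟨x₀, hx₀, hTx₀⟩ := exists_norm_eq_one_norm_apply_lt (hT ▸ hε : minMod T < ε)
  obtain ⟨f, hfx₀, hf⟩ := exists_smulRight_apply_eq_norm_eq (𝕜 := ℝ) hx₀ (T x₀)
  have hSx₀ : (T - f.smulRight (T x₀)) x₀ = 0 := by
    rw [sub_apply, hfx₀, sub_self]
  exact ⟨f.smulRight (T x₀), ⟨f, T x₀, fun _ => rfl⟩, hf ▸ hTx₀,
    minMod_eq_zero_of_apply_eq_zero hx₀ hSx₀, attainsMinMod_of_apply_eq_zero hx₀ hSx₀⟩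

theorem stmt0 {X Y : Type*} [NormedAddCommGroup X] [NormedSpace ℝ X] [CompleteSpace X]
    [NormedAddCommGroup Y] [NormedSpace ℝ Y] [CompleteSpace Y] [Nontrivial X]
    (T : X →L[ℝ] Y) (hT : minMod T = 0) :
    ∀ ε : ℝ, 0 < ε → ∃ K : X →L[ℝ] Y,
      (∃ (f : X →L[ℝ] ℝ) (y : Y), ∀ x : X, K x = f x • y) ∧
      ‖K‖ < ε ∧ minMod (T - K) = 0 ∧ AttainsMinMod (T - K) :=
  stmt0_general T hT
end

section
/- Let X and Y be Banach spaces such that the pair (X,Y) satisfies both property (m) and property (o). Then for every x ∈ X, y ∈ Y with ‖x‖ < ‖y‖, every operator T ∈ L(X,Y) with m(T) ≥ 1, and every weakly null sequence (x_n) in X, one has limsup_n ‖x + x_n‖ < limsup_n ‖y + T x_n‖. -/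
open Filter Topology

lemma bounded_of_weaklyNull {X : Type*} [NormedAddCommGroup X] [NormedSpace ℝ X]
    {xs : ℕ → X} (h : WeaklyNull xs) : ∃ C : ℝ, ∀ n, ‖xs n‖ ≤ C := by
  set g : ℕ → StrongDual ℝ X →L[ℝ] ℝ :=
    fun n => NormedSpace.inclusionInDoubleDual ℝ X (xs n) with hg
  have hpt : ∀ f : StrongDual ℝ X, ∃ C, ∀ n, ‖g n f‖ ≤ C := by
    intro f
    have h1 : Tendsto (fun n => ‖f (xs n)‖) atTop (𝓝 ‖(0:ℝ)‖) := (h f).norm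
    obtain ⟨C, hC⟩ := h1.bddAbove_range
    exact ⟨C, fun n => hC ⟨n, rfl⟩⟩
  obtain ⟨C', hC'⟩ := banach_steinhaus hpt
  refine ⟨C', fun n => ?_⟩
  have : ‖g n‖ = ‖xs n‖ := (NormedSpace.inclusionInDoubleDualLi ℝ (E := X)).norm_map (xs n)
  rw [← this]; exact hC' n

theorem stmt2 {X Y : Type*} [NormedAddCommGroup X] [NormedSpace ℝ X] [CompleteSpace X]
    [NormedAddCommGroup Y] [NormedSpace ℝ Y] [CompleteSpace Y]
    (hm : PairPropM X Y) (ho : PairPropO X Y) :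
    ∀ (x : X) (y : Y), ‖x‖ < ‖y‖ → ∀ T : X →L[ℝ] Y, 1 ≤ minMod T →
      ∀ xs : ℕ → X, WeaklyNull xs →
        limsup (fun n => ‖x + xs n‖) atTop < limsup (fun n => ‖y + T (xs n)‖) atTop := by
  intro x y hxy T hT xs hxs
  set G := limsup (fun n => ‖y + T (xs n)‖) atTop with hG
  have hy : y ≠ 0 := by
    intro h
    rw [h, norm_zero] at hxy
    exact absurd hxy (not_lt.mpr (norm_nonneg x))
  have hs : limsup (fun n => ‖xs n‖) atTop < G := ho T hT y hy xs hxs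
  by_cases hx : x = 0
  · subst hx; simp only [zero_add]; exact hs
  · have hx0 : (0:ℝ) < ‖x‖ := norm_pos_iff.mpr hx
    have hy0 : (0:ℝ) < ‖y‖ := lt_trans hx0 hxy
    set k := ‖y‖ / ‖x‖ with hk
    set c := ‖x‖ / ‖y‖ with hc
    have hck : c * k = 1 := by rw [hc, hk]; field_simp
    have hc0 : 0 < c := div_pos hx0 hy0
    have hc1 : c < 1 := (div_lt_one hy0).mpr hxy
    have hk0 : 0 < k := div_pos hy0 hx0
    have hnorm : ‖k • x‖ ≤ ‖y‖ := by
      rw [norm_smul, Real.norm_eq_abs, abs_of_pos hk0, hk]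
      rw [div_mul_cancel₀ _ (ne_of_gt hx0)]
    have hB : limsup (fun n => ‖k • x + xs n‖) atTop ≤ G :=
      hm T hT (k • x) y hnorm xs hxs
    set s := limsup (fun n => ‖xs n‖) atTop with hsdef
    obtain ⟨C, hC⟩ := bounded_of_weaklyNull hxs
    have hb1 : IsBoundedUnder (· ≤ ·) atTop (fun n => ‖xs n‖) :=
      isBoundedUnder_of ⟨C, hC⟩
    have hb2 : IsBoundedUnder (· ≤ ·) atTop (fun n => ‖k • x + xs n‖) :=
      isBoundedUnder_of ⟨‖k • x‖ + C, fun n =>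
        le_trans (norm_add_le _ _) (by linarith [hC n])⟩
    set ε := (1 - c) * (G - s) / 2 with hε
    have hεpos : 0 < ε := by
      apply div_pos _ (by norm_num)
      exact mul_pos (by linarith) (by linarith)
    have e1 : ∀ᶠ n in atTop, ‖xs n‖ < s + ε :=
      eventually_lt_of_limsup_lt (by linarith) hb1
    have e2 : ∀ᶠ n in atTop, ‖k • x + xs n‖ < G + ε :=
      eventually_lt_of_limsup_lt (by linarith) hb2
    have e3 : ∀ᶠ n in atTop, ‖x + xs n‖ ≤ c * (G + ε) + (1 - c) * (s + ε) := by
      filter_upwards [e1, e2] with n h1 h2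
      have h4 : c • (k • x + xs n) + (1 - c) • (xs n) = x + xs n := by
        rw [smul_add, smul_smul, hck, one_smul, add_assoc, ← add_smul]
        norm_num
      calc ‖x + xs n‖ = ‖c • (k • x + xs n) + (1 - c) • (xs n)‖ := by rw [h4]
        _ ≤ ‖c • (k • x + xs n)‖ + ‖(1 - c) • (xs n)‖ := norm_add_le _ _
        _ = c * ‖k • x + xs n‖ + (1 - c) * ‖xs n‖ := by
            rw [norm_smul, norm_smul, Real.norm_eq_abs, Real.norm_eq_abs,
              abs_of_pos hc0, abs_of_pos (by linarith : (0:ℝ) < 1 - c)]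
        _ ≤ c * (G + ε) + (1 - c) * (s + ε) := by
            have := mul_le_mul_of_nonneg_left h2.le hc0.le
            have := mul_le_mul_of_nonneg_left h1.le (by linarith : (0:ℝ) ≤ 1 - c)
            linarith
    have hcob : IsCoboundedUnder (· ≤ ·) atTop (fun n => ‖x + xs n‖) :=
      isCoboundedUnder_le_of_le atTop (fun n => norm_nonneg _)
    have hfin : limsup (fun n => ‖x + xs n‖) atTop ≤ c * (G + ε) + (1 - c) * (s + ε) :=
      limsup_le_of_le hcob e3
    have key : c * (G + ε) + (1 - c) * (s + ε) = G - ε := by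
      rw [hε]; ring
    linarith
end

section
/- Let X and Y be Banach spaces. If both X and Y have property (M), then the pair (X,Y) has property (m). -/
open Filter Topology

/-
Let `m = m(T) ≥ 1` and `c > 1`, and pick a unit vector `u` with `‖T u‖ < c m`.
Property (M) of `X` replaces `x` by `‖x‖ u`; the lower bound `‖T v‖ ≥ m ‖v‖` moves everything
to `Y` after scaling by `m⁻¹`; property (M) of `Y` replaces `m⁻¹ ‖x‖ T u` by `c y`, whose norm is
larger; finally `c y + m⁻¹ T xₙ = m⁻¹ (y + T xₙ) + (c - m⁻¹) y` and `‖y‖ ≤ limsup ‖y + T xₙ‖`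
(test against a norming functional of `y`) give the bound `c · limsup ‖y + T xₙ‖`. Let `c → 1`.
-/

lemma limsup_le_mul_limsup_add {f g : ℕ → ℝ} {a b : ℝ} (ha : 0 ≤ a) (hf : ∀ n, 0 ≤ f n)
    (hg : ∀ n, 0 ≤ g n) (hg_bdd : IsBoundedUnder (· ≤ ·) atTop g)
    (hfg : ∀ n, f n ≤ a * g n + b) :
    limsup f atTop ≤ a * limsup g atTop + b := by
  have hmono : Monotone fun t : ℝ => a * t + b := fun s t hst => by dsimp only; gcongr
  rw [hmono.map_limsup_of_continuousAt g (by fun_prop) hg_bdd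
    (isCoboundedUnder_le_of_le atTop hg)]
  exact limsup_le_limsup (Eventually.of_forall hfg) (isCoboundedUnder_le_of_le atTop hf)
    (hmono.isBoundedUnder_le_comp hg_bdd)

namespace WeaklyNull

variable {X Y : Type*} [NormedAddCommGroup X] [NormedSpace ℝ X]
  [NormedAddCommGroup Y] [NormedSpace ℝ Y] {xs : ℕ → X}

lemma map (hxs : WeaklyNull xs) (T : X →L[ℝ] Y) : WeaklyNull fun n => T (xs n) :=
  fun f => hxs (f.comp T)

lemma const_smul (hxs : WeaklyNull xs) (a : ℝ) : WeaklyNull fun n => a • xs n := by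
  intro f
  simpa using (hxs f).const_mul a

/-- Uniform boundedness in the bidual; the dual space is complete even when `X` is not. -/
lemma exists_norm_le (hxs : WeaklyNull xs) : ∃ C, ∀ n, ‖xs n‖ ≤ C := by
  let g : ℕ → StrongDual ℝ (StrongDual ℝ X) := fun n =>
    NormedSpace.inclusionInDoubleDual ℝ X (xs n)
  have hg : ∀ f : StrongDual ℝ X, ∃ C, ∀ n, ‖g n f‖ ≤ C := fun f => by
    obtain ⟨C, hC⟩ := (hxs f).norm.bddAbove_range
    exact ⟨C, fun n => hC ⟨n, rfl⟩⟩
  obtain ⟨C, hC⟩ := banach_steinhaus hg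
  refine ⟨C, fun n => ?_⟩
  rw [← (NormedSpace.inclusionInDoubleDualLi ℝ).norm_map (xs n)]
  exact hC n

lemma isBoundedUnder_norm_const_add (hxs : WeaklyNull xs) (y : X) :
    IsBoundedUnder (· ≤ ·) atTop fun n => ‖y + xs n‖ := by
  obtain ⟨C, hC⟩ := hxs.exists_norm_le
  exact isBoundedUnder_of ⟨‖y‖ + C, fun n => (norm_add_le _ _).trans (by gcongr; exact hC n)⟩

lemma norm_le_limsup_norm_const_add (hxs : WeaklyNull xs) (y : X) :
    ‖y‖ ≤ limsup (fun n => ‖y + xs n‖) atTop := by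
  obtain ⟨g, hg, hgy⟩ := exists_dual_vector'' ℝ y
  have hlim : Tendsto (fun n => g (y + xs n)) atTop (𝓝 ‖y‖) := by
    simpa [hgy] using (hxs g).const_add (g y)
  rw [← hlim.limsup_eq]
  refine limsup_le_limsup (Eventually.of_forall fun n => ?_)
    hlim.isBoundedUnder_ge.isCoboundedUnder_le (hxs.isBoundedUnder_norm_const_add y)
  exact (le_abs_self _).trans ((g.le_opNorm _).trans (mul_le_of_le_one_left (norm_nonneg _) hg))

end WeaklyNull

section minMod

variable {X Y : Type*} [NormedAddCommGroup X] [NormedSpace ℝ X]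
  [NormedAddCommGroup Y] [NormedSpace ℝ Y] (T : X →L[ℝ] Y)

lemma minMod_mul_norm_le (z : X) : minMod T * ‖z‖ ≤ ‖T z‖ := by
  rcases eq_or_ne z 0 with rfl | hz
  · simp
  have hle : minMod T ≤ ‖T (‖z‖⁻¹ • z)‖ :=
    csInf_le ⟨0, by rintro r ⟨u, -, rfl⟩; exact norm_nonneg _⟩ ⟨_, norm_smul_inv_norm hz, rfl⟩
  rwa [map_smul, norm_smul, norm_inv, norm_norm, inv_mul_eq_div,
    le_div_iff₀ (norm_pos_iff.2 hz)] at hle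

lemma exists_norm_apply_lt_of_minMod_lt (hT : minMod T ≠ 0) {r : ℝ} (hr : minMod T < r) :
    ∃ u : X, ‖u‖ = 1 ∧ ‖T u‖ < r := by
  have hne : {r : ℝ | ∃ u : X, ‖u‖ = 1 ∧ ‖T u‖ = r}.Nonempty := by
    by_contra h
    exact hT (by rw [minMod, Set.not_nonempty_iff_eq_empty.1 h, Real.sInf_empty])
  obtain ⟨_, ⟨u, hu, rfl⟩, hlt⟩ := exists_lt_of_csInf_lt hne hr
  exact ⟨u, hu, hlt⟩

end minMod

lemma limsup_norm_add_le_mul_limsup {X Y : Type*} [NormedAddCommGroup X] [NormedSpace ℝ X]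
    [NormedAddCommGroup Y] [NormedSpace ℝ Y] (hX : PropertyM X) (hY : PropertyM Y)
    {T : X →L[ℝ] Y} (hT : 1 ≤ minMod T) {x : X} {y : Y} (hxy : ‖x‖ ≤ ‖y‖) {xs : ℕ → X}
    (hxs : WeaklyNull xs) {c : ℝ} (hc : 1 < c) :
    limsup (fun n => ‖x + xs n‖) atTop ≤ c * limsup (fun n => ‖y + T (xs n)‖) atTop := by
  set m := minMod T
  set L := limsup (fun n => ‖y + T (xs n)‖) atTop
  have hm : 0 < m := one_pos.trans_le hT
  have ha : 0 < m⁻¹ := inv_pos.2 hm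
  have hac : m⁻¹ ≤ c := (inv_le_one_of_one_le₀ hT).trans hc.le
  obtain ⟨u, hu, hTu⟩ := exists_norm_apply_lt_of_minMod_lt T hm.ne' (lt_mul_of_one_lt_left hm hc)
  have hzs : WeaklyNull fun n => m⁻¹ • T (xs n) := (hxs.map T).const_smul m⁻¹
  have hyL : ‖y‖ ≤ L := (hxs.map T).norm_le_limsup_norm_const_add y
  calc limsup (fun n => ‖x + xs n‖) atTop
      ≤ limsup (fun n => ‖‖x‖ • u + xs n‖) atTop :=
        hX _ _ (by rw [norm_smul, norm_norm, hu, mul_one]) xs hxs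
    _ ≤ limsup (fun n => ‖m⁻¹ • T (‖x‖ • u) + m⁻¹ • T (xs n)‖) atTop := by
        refine limsup_le_limsup (Eventually.of_forall fun n => ?_)
          (isCoboundedUnder_le_of_le atTop fun n => norm_nonneg _)
          (hzs.isBoundedUnder_norm_const_add _)
        dsimp only
        rw [← smul_add, ← map_add, norm_smul, Real.norm_of_nonneg ha.le, inv_mul_eq_div,
          le_div_iff₀ hm, mul_comm]
        exact minMod_mul_norm_le T _
    _ ≤ limsup (fun n => ‖c • y + m⁻¹ • T (xs n)‖) atTop := by
        refine hY _ _ ?_ _ hzs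
        rw [map_smul, norm_smul, norm_smul, norm_smul, norm_norm, Real.norm_of_nonneg ha.le,
          Real.norm_of_nonneg (one_pos.trans hc).le]
        calc m⁻¹ * (‖x‖ * ‖T u‖) ≤ m⁻¹ * (‖x‖ * (c * m)) := by gcongr
          _ = c * ‖x‖ := by field_simp
          _ ≤ c * ‖y‖ := by gcongr
    _ ≤ m⁻¹ * L + (c - m⁻¹) * ‖y‖ := by
        refine limsup_le_mul_limsup_add ha.le (fun n => norm_nonneg _) (fun n => norm_nonneg _)
          ((hxs.map T).isBoundedUnder_norm_const_add y) fun n => ?_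
        have hsplit : c • y + m⁻¹ • T (xs n) = m⁻¹ • (y + T (xs n)) + (c - m⁻¹) • y := by
          rw [smul_add, sub_smul]; abel
        rw [hsplit]
        refine (norm_add_le _ _).trans_eq ?_
        rw [norm_smul, norm_smul, Real.norm_of_nonneg ha.le, Real.norm_of_nonneg (sub_nonneg.2 hac)]
    _ ≤ m⁻¹ * L + (c - m⁻¹) * L := by gcongr
    _ = c * L := by ring

theorem stmt4_general {X Y : Type*} [NormedAddCommGroup X] [NormedSpace ℝ X]
    [NormedAddCommGroup Y] [NormedSpace ℝ Y]
    (hX : PropertyM X) (hY : PropertyM Y) : PairPropM X Y := by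
  intro T hT x y hxy xs hxs
  have hlim : Tendsto (fun c : ℝ => c * limsup (fun n => ‖y + T (xs n)‖) atTop) (𝓝[>] 1)
      (𝓝 (1 * limsup (fun n => ‖y + T (xs n)‖) atTop)) :=
    ((continuous_mul_const _).tendsto 1).mono_left nhdsWithin_le_nhds
  simpa using ge_of_tendsto hlim (eventually_nhdsWithin_of_forall fun c hc =>
    limsup_norm_add_le_mul_limsup hX hY hT hxy hxs hc)

theorem stmt4 {X Y : Type*} [NormedAddCommGroup X] [NormedSpace ℝ X] [CompleteSpace X]
    [NormedAddCommGroup Y] [NormedSpace ℝ Y] [CompleteSpace Y]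
    (hX : PropertyM X) (hY : PropertyM Y) : PairPropM X Y :=
  stmt4_general hX hY
end

section
/- Let X and Y be Banach spaces. If X has the Opial property and Y has property (M), then the pair (X,Y) has property (o). -/
open Filter Topology

theorem stmt6 {X Y : Type*} [NormedAddCommGroup X] [NormedSpace ℝ X] [CompleteSpace X]
    [NormedAddCommGroup Y] [NormedSpace ℝ Y] [CompleteSpace Y]
    (hX : OpialProperty X) (hY : PropertyM Y) : PairPropO X Y := by
  intro T hT y hy xs hxs
  -- ‖v‖ ≤ ‖T v‖ for all v
  have hbdd : BddBelow {r : ℝ | ∃ x : X, ‖x‖ = 1 ∧ ‖T x‖ = r} := by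
    refine ⟨0, ?_⟩
    rintro r ⟨x, -, rfl⟩
    exact norm_nonneg _
  have hTle : ∀ v : X, ‖v‖ ≤ ‖T v‖ := by
    intro v
    rcases eq_or_ne v 0 with rfl | hv
    · simp
    · have hv' : ‖v‖ ≠ 0 := norm_ne_zero_iff.mpr hv
      have hu : ‖(‖v‖⁻¹ • v : X)‖ = 1 := by
        rw [norm_smul, norm_inv, norm_norm, inv_mul_cancel₀ hv']
      have h1 : minMod T ≤ ‖T (‖v‖⁻¹ • v)‖ := csInf_le hbdd ⟨_, hu, rfl⟩
      have h2 : (1 : ℝ) ≤ ‖v‖⁻¹ * ‖T v‖ := by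
        have := le_trans hT h1
        rwa [map_smul, norm_smul, norm_inv, norm_norm] at this
      have hvpos : (0 : ℝ) < ‖v‖ := norm_pos_iff.mpr hv
      calc ‖v‖ = ‖v‖ * 1 := (mul_one _).symm
        _ ≤ ‖v‖ * (‖v‖⁻¹ * ‖T v‖) := by
            exact mul_le_mul_of_nonneg_left h2 (le_of_lt hvpos)
        _ = ‖T v‖ := by field_simp
  -- X is nontrivial
  have hex : ∃ v : X, v ≠ 0 := by
    by_contra h
    push_neg at h
    have hempty : {r : ℝ | ∃ x : X, ‖x‖ = 1 ∧ ‖T x‖ = r} = ∅ := by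
      ext r
      simp only [Set.mem_setOf_eq, Set.mem_empty_iff_false, iff_false, not_exists]
      rintro x ⟨hx1, -⟩
      rw [h x] at hx1
      simp at hx1
    rw [minMod, hempty, Real.sInf_empty] at hT
    linarith
  obtain ⟨v, hv⟩ := hex
  have hvpos : (0 : ℝ) < ‖v‖ := norm_pos_iff.mpr hv
  have hTvpos : (0 : ℝ) < ‖T v‖ := lt_of_lt_of_le hvpos (hTle v)
  have hypos : (0 : ℝ) < ‖y‖ := norm_pos_iff.mpr hy
  -- pick x ≠ 0 with ‖T x‖ = ‖y‖
  set x : X := (‖y‖ / ‖T v‖) • v with hxdef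
  have hx0 : x ≠ 0 := by
    apply smul_ne_zero _ hv
    positivity
  have hTx : ‖T x‖ = ‖y‖ := by
    rw [hxdef, map_smul, norm_smul, Real.norm_eq_abs, abs_of_pos (by positivity)]
    field_simp
  -- weak null of T ∘ xs
  have hTw : WeaklyNull (fun n => T (xs n)) := by
    intro g
    exact hxs (g.comp T)
  -- boundedness of xs via Banach–Steinhaus
  obtain ⟨C, hC⟩ : ∃ C : ℝ, ∀ n, ‖xs n‖ ≤ C := by
    have h := banach_steinhaus
      (g := fun n => (NormedSpace.inclusionInDoubleDualLi ℝ (E := X) (xs n) :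
        StrongDual ℝ X →L[ℝ] ℝ)) ?_
    · obtain ⟨C', hC'⟩ := h
      refine ⟨C', fun n => ?_⟩
      have := hC' n
      rwa [(NormedSpace.inclusionInDoubleDualLi ℝ (E := X)).norm_map] at this
    · intro f
      have hf : Tendsto (fun n => f (xs n)) atTop (𝓝 0) := hxs f
      obtain ⟨M, hM⟩ := hf.norm.bddAbove_range
      refine ⟨M, fun n => ?_⟩
      have : ‖f (xs n)‖ ≤ M := hM ⟨n, rfl⟩
      simpa [NormedSpace.inclusionInDoubleDualLi] using this
  -- Step 1 : Opial
  have step1 : limsup (fun n => ‖xs n‖) atTop < limsup (fun n => ‖x + xs n‖) atTop :=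
    hX x hx0 xs hxs
  -- Step 2 : limsup ‖x + xs n‖ ≤ limsup ‖T x + T (xs n)‖
  have step2 : limsup (fun n => ‖x + xs n‖) atTop ≤
      limsup (fun n => ‖T x + T (xs n)‖) atTop := by
    refine limsup_le_limsup (Eventually.of_forall fun n => ?_) ?_ ?_
    · have := hTle (x + xs n)
      rwa [map_add] at this
    · exact isCoboundedUnder_le_of_le atTop (fun n => norm_nonneg _)
    · refine isBoundedUnder_of ⟨‖T x‖ + ‖T‖ * C, fun n => ?_⟩
      calc ‖T x + T (xs n)‖ ≤ ‖T x‖ + ‖T (xs n)‖ := norm_add_le _ _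
        _ ≤ ‖T x‖ + ‖T‖ * C := by
            have h1 : ‖T (xs n)‖ ≤ ‖T‖ * ‖xs n‖ := T.le_opNorm _
            have h2 : ‖T‖ * ‖xs n‖ ≤ ‖T‖ * C :=
              mul_le_mul_of_nonneg_left (hC n) (norm_nonneg _)
            linarith
  -- Step 3 : property (M)
  have step3 : limsup (fun n => ‖T x + T (xs n)‖) atTop ≤
      limsup (fun n => ‖y + T (xs n)‖) atTop :=
    hY y (T x) (le_of_eq hTx) (fun n => T (xs n)) hTw
  exact lt_of_lt_of_le step1 (le_trans step2 step3)
end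

section
/- Let X and Y be Banach spaces. If X has the Opial property and the pair (X,Y) has property (m), then (X,Y) has property (o). -/
open Filter Topology

theorem stmt7 {X Y : Type*} [NormedAddCommGroup X] [NormedSpace ℝ X] [CompleteSpace X]
    [NormedAddCommGroup Y] [NormedSpace ℝ Y] [CompleteSpace Y]
    (hX : OpialProperty X) (hm : PairPropM X Y) : PairPropO X Y := by
  intro T hT y hy xs hxs
  by_cases h : ∃ u : X, ‖u‖ = 1
  · obtain ⟨u, hu⟩ := h
    set x : X := ‖y‖ • u with hxdef
    have hxn : ‖x‖ = ‖y‖ := by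
      rw [hxdef, norm_smul, Real.norm_eq_abs, abs_norm, hu, mul_one]
    have hx0 : x ≠ 0 := by
      intro h0
      apply hy
      have h1 := hxn
      rw [h0, norm_zero] at h1
      exact norm_eq_zero.mp h1.symm
    exact lt_of_lt_of_le (hX x hx0 xs hxs) (hm T hT x y hxn.le xs hxs)
  · exfalso
    have hset : {r : ℝ | ∃ x : X, ‖x‖ = 1 ∧ ‖T x‖ = r} = ∅ := by
      ext r
      simp only [Set.mem_setOf_eq, Set.mem_empty_iff_false, iff_false]
      rintro ⟨x, hx, -⟩
      exact h ⟨x, hx⟩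
    have h0 : minMod T = 0 := by rw [minMod, hset, Real.sInf_empty]
    rw [h0] at hT
    linarith
end

section
/- The pair (c_0, ℓ_p), 1 ≤ p < ∞, fails the weak minimizing property. Specifically, let x*_j = 2^{-j} e*_j − Σ_{i>j} 2^{-i} e*_i ∈ ℓ_1 and T = Σ_i x*_i ⊗ f_i ∈ L(c_0, ℓ_p). Then ‖T(Σ_{k=1}^m e_k)‖ = m^{1/p}/2^m, so m(T)=0 and (Σ_{k=1}^n e_k)_n is a non-weakly null minimizing sequence, but no x ∈ S_{c_0} satisfies Tx = 0, so T does not attain its minimum modulus. -/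
open Filter Topology

open scoped ENNReal ZeroAtInfty

/-!
Coordinate `j` of `T` is the functional `x ↦ 2⁻⁽ʲ⁺¹⁾ x j - ∑_{i > j} 2⁻⁽ⁱ⁺¹⁾ x i`, of norm at most
`2⁻ʲ`; these norms form an `ℓ^p` sequence, which makes `T` bounded. On the indicator of
`{0, …, m - 1}` every coordinate `j < m` telescopes to `2⁻ᵐ`, which gives the norm formula and
`m(T) = 0`, while evaluation at `0` keeps these unit vectors away from being weakly null.
If `T x = 0`, subtracting the equations for coordinates `j` and `j + 1` gives `x j = x (j + 1)`,
so `x` is constant and, vanishing at infinity, zero.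
-/

namespace ZeroAtInftyContinuousMap

variable {α β : Type*} [TopologicalSpace α] [NormedAddCommGroup β]

lemma norm_apply_le (f : C₀(α, β)) (x : α) : ‖f x‖ ≤ ‖f‖ :=
  norm_toBCF_eq_norm (f := f) ▸ f.toBCF.norm_coe_le_norm x

noncomputable def evalCLM (𝕜 : Type*) [NontriviallyNormedField 𝕜] [NormedSpace 𝕜 β] (x : α) :
    C₀(α, β) →L[𝕜] β :=
  LinearMap.mkContinuous
    { toFun := fun f => f x
      map_add' := fun _ _ => rfl
      map_smul' := fun _ _ => rfl }
    1 fun f => (norm_apply_le f x).trans_eq (one_mul _).symm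

@[simp]
lemma evalCLM_apply (𝕜 : Type*) [NontriviallyNormedField 𝕜] [NormedSpace 𝕜 β] (x : α)
    (f : C₀(α, β)) : evalCLM 𝕜 x f = f x := rfl

lemma norm_evalCLM_le (𝕜 : Type*) [NontriviallyNormedField 𝕜] [NormedSpace 𝕜 β] (x : α) :
    ‖(evalCLM 𝕜 x : C₀(α, β) →L[𝕜] β)‖ ≤ 1 :=
  LinearMap.mkContinuous_norm_le _ zero_le_one _

lemma tendsto_apply_atTop (f : C₀(ℕ, β)) : Tendsto (fun n => f n) atTop (𝓝 0) := by
  simpa only [cocompact_eq_cofinite, Nat.cofinite_eq_atTop] using zero_at_infty f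

lemma eq_zero_of_apply_succ_eq (f : C₀(ℕ, β)) (h : ∀ n, f (n + 1) = f n) : f = 0 := by
  have hconst : ∀ n, f n = f 0 := fun n => by
    induction n with
    | zero => rfl
    | succ n ih => rw [h n, ih]
  have hf0 : f 0 = 0 :=
    tendsto_nhds_unique tendsto_const_nhds ((tendsto_apply_atTop f).congr hconst)
  ext n
  rw [hconst n, hf0, coe_zero, Pi.zero_apply]

noncomputable def indicatorRange (m : ℕ) : C₀(ℕ, ℝ) where
  toFun i := if i < m then 1 else 0
  continuous_toFun := continuous_of_discreteTopology
  zero_at_infty' := by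
    rw [cocompact_eq_cofinite, Nat.cofinite_eq_atTop]
    refine tendsto_const_nhds.congr' ?_
    filter_upwards [eventually_ge_atTop m] with i hi
    rw [if_neg hi.not_gt]

lemma indicatorRange_apply (m i : ℕ) : indicatorRange m i = if i < m then 1 else 0 := rfl

lemma norm_indicatorRange_succ (m : ℕ) : ‖indicatorRange (m + 1)‖ = 1 := by
  refine le_antisymm ?_ ?_
  · rw [← norm_toBCF_eq_norm]
    refine (BoundedContinuousFunction.norm_le zero_le_one).2 fun i => ?_
    change ‖indicatorRange (m + 1) i‖ ≤ 1
    rw [indicatorRange_apply]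
    split <;> norm_num
  · simpa [indicatorRange_apply] using norm_apply_le (indicatorRange (m + 1)) 0

end ZeroAtInftyContinuousMap

section lp

variable {p : ℝ≥0∞}

noncomputable def lp.geometricTwo [Fact (1 ≤ p)] : lp (fun _ : ℕ => ℝ) p :=
  ⟨fun j => (1 / 2 : ℝ) ^ j, Memℓp.of_exponent_ge (memℓp_gen (p := 1) (by
    simpa only [ENNReal.toReal_one, Real.rpow_one, norm_pow, norm_div, norm_one,
      Real.norm_ofNat] using summable_geometric_two)) Fact.out⟩

variable {α X : Type*} [NormedAddCommGroup X] [NormedSpace ℝ X]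

lemma lp.norm_apply_le_norm_smul_apply (φ : α → X →L[ℝ] ℝ) (c : lp (fun _ : α => ℝ) p)
    (hφ : ∀ j, ‖φ j‖ ≤ c j) (x : X) (j : α) : ‖φ j x‖ ≤ ‖(‖x‖ • c) j‖ := calc
  ‖φ j x‖ ≤ ‖φ j‖ * ‖x‖ := (φ j).le_opNorm x
  _ ≤ ‖c j‖ * ‖x‖ := by gcongr; exact (hφ j).trans (Real.le_norm_self _)
  _ = ‖(‖x‖ • c) j‖ := by rw [lp.coeFn_smul, Pi.smul_apply, norm_smul, norm_norm, mul_comm]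

noncomputable def lp.coordsCLM [Fact (1 ≤ p)] (φ : α → X →L[ℝ] ℝ) (c : lp (fun _ : α => ℝ) p)
    (hφ : ∀ j, ‖φ j‖ ≤ c j) : X →L[ℝ] lp (fun _ : α => ℝ) p :=
  LinearMap.mkContinuous
    { toFun := fun x => ⟨fun j => φ j x,
        (lp.memℓp (‖x‖ • c)).mono' (lp.norm_apply_le_norm_smul_apply φ c hφ x)⟩
      map_add' := fun x y => Subtype.ext <| funext fun j => map_add (φ j) x y
      map_smul' := fun a x => Subtype.ext <| funext fun j => map_smul (φ j) a x }
    ‖c‖ fun x => by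
      refine (lp.norm_mono (zero_lt_one.trans_le Fact.out).ne'
        (lp.norm_apply_le_norm_smul_apply φ c hφ x)).trans_eq ?_
      rw [norm_smul, norm_norm, mul_comm]

lemma lp.norm_eq_of_eq_indicator_range [Fact (1 ≤ p)] {m : ℕ} (hm : m ≠ 0) {c : ℝ} (hc : 0 ≤ c)
    (f : lp (fun _ : ℕ => ℝ) p) (hf : ∀ j, f j = if j < m then c else 0) :
    ‖f‖ = (m : ℝ) ^ (1 / p.toReal) * c := by
  have hfc : ∀ j, ‖f j‖ ≤ c := fun j => by
    rw [hf]; split <;> simp [abs_of_nonneg hc, hc]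
  rcases eq_or_ne p ⊤ with rfl | hp
  · rw [ENNReal.toReal_top, div_zero, Real.rpow_zero, one_mul]
    refine le_antisymm (lp.norm_le_of_forall_le hc hfc) ?_
    have h0 := lp.norm_apply_le_norm ENNReal.top_ne_zero f 0
    rwa [hf, if_pos (Nat.pos_of_ne_zero hm), Real.norm_eq_abs, abs_of_nonneg hc] at h0
  have hq : 0 < p.toReal := ENNReal.toReal_pos (zero_lt_one.trans_le Fact.out).ne' hp
  have hsum : ∑' j, ‖f j‖ ^ p.toReal = m * c ^ p.toReal := by
    rw [tsum_eq_sum (s := Finset.range m) fun j hj => by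
      simp [hf, Finset.mem_range.not.mp hj, hq.ne']]
    rw [Finset.sum_congr rfl fun j hj => by
      rw [hf, if_pos (Finset.mem_range.mp hj), Real.norm_eq_abs, abs_of_nonneg hc]]
    simp
  rw [lp.norm_eq_tsum_rpow hq, hsum, Real.mul_rpow (Nat.cast_nonneg m) (by positivity),
    ← Real.rpow_mul hc, mul_one_div_cancel hq.ne', Real.rpow_one]

end lp

section MinMod

variable {X Y : Type*} [NormedAddCommGroup X] [NormedSpace ℝ X]
  [NormedAddCommGroup Y] [NormedSpace ℝ Y]

lemma minMod_eq_zero_of_tendsto {T : X →L[ℝ] Y} {xs : ℕ → X} (hxs : ∀ n, ‖xs n‖ = 1)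
    (hT : Tendsto (fun n => ‖T (xs n)‖) atTop (𝓝 0)) : minMod T = 0 := by
  have hmem : ∀ n, ‖T (xs n)‖ ∈ {r : ℝ | ∃ x : X, ‖x‖ = 1 ∧ ‖T x‖ = r} :=
    fun n => ⟨xs n, hxs n, rfl⟩
  have hnonneg : ∀ r ∈ {r : ℝ | ∃ x : X, ‖x‖ = 1 ∧ ‖T x‖ = r}, 0 ≤ r := by
    rintro r ⟨x, -, rfl⟩
    exact norm_nonneg _
  refine le_antisymm ?_ (le_csInf ⟨_, hmem 0⟩ hnonneg)
  exact ge_of_tendsto' hT fun n => csInf_le ⟨0, hnonneg⟩ (hmem n)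

lemma not_attainsMinMod_of_minMod_eq_zero {T : X →L[ℝ] Y} (h0 : minMod T = 0)
    (hT : ∀ x : X, ‖x‖ = 1 → T x ≠ 0) : ¬ AttainsMinMod T := by
  rintro ⟨x, hx, hTx⟩
  exact hT x hx (norm_eq_zero.mp (hTx.trans h0))

lemma not_weaklyNull_of_apply_eq_one {xs : ℕ → X} (f : X →L[ℝ] ℝ) (hf : ∀ n, f (xs n) = 1) :
    ¬ WeaklyNull xs := fun h =>
  one_ne_zero (tendsto_nhds_unique tendsto_const_nhds ((h f).congr hf))

end MinMod

lemma tendsto_rpow_div_two_pow (r : ℝ) :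
    Tendsto (fun m : ℕ => ((m : ℝ) + 1) ^ r / 2 ^ (m + 1)) atTop (𝓝 0) := by
  have h := (isLittleO_rpow_exp_pos_mul_atTop r (Real.log_pos one_lt_two)).tendsto_div_nhds_zero
  have hm : Tendsto (fun m : ℕ => (m : ℝ) + 1) atTop atTop :=
    tendsto_atTop_add_const_right _ 1 tendsto_natCast_atTop_atTop
  refine (h.comp hm).congr fun m => ?_
  rw [Function.comp_apply, ← Real.rpow_def_of_pos two_pos, ← Nat.cast_succ, Real.rpow_natCast]

namespace MinModCounterexample

open ZeroAtInftyContinuousMap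

lemma hasSum_geometric_tail (j : ℕ) :
    HasSum (fun i : ℕ => if j < i then (1 / 2 : ℝ) ^ (i + 1) else 0) ((1 / 2) ^ (j + 1)) := by
  rw [← hasSum_nat_add_iff' (j + 1), Finset.sum_eq_zero fun i hi => if_neg (by simp at hi; omega),
    sub_zero]
  have h (n : ℕ) : (if j < n + (j + 1) then (1 / 2 : ℝ) ^ (n + (j + 1) + 1) else 0)
      = (1 / 2) ^ (j + 1) / 2 / 2 ^ n := by
    rw [if_pos (by omega)]
    simp only [one_div, inv_pow]
    field_simp
    ring
  simpa only [h] using hasSum_geometric_two' ((1 / 2 : ℝ) ^ (j + 1))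

lemma norm_weightedTerm_le (x : C₀(ℕ, ℝ)) (j i : ℕ) :
    ‖if j < i then (1 / 2 : ℝ) ^ (i + 1) * x i else 0‖
      ≤ (if j < i then (1 / 2 : ℝ) ^ (i + 1) else 0) * ‖x‖ := by
  split
  · rw [norm_mul, norm_pow, norm_div, norm_one, Real.norm_ofNat]
    gcongr
    exact norm_apply_le x i
  · simp

lemma summable_weightedTerm (x : C₀(ℕ, ℝ)) (j : ℕ) :
    Summable fun i : ℕ => if j < i then (1 / 2 : ℝ) ^ (i + 1) * x i else 0 :=
  .of_norm_bounded ((hasSum_geometric_tail j).summable.mul_right ‖x‖) (norm_weightedTerm_le x j)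

noncomputable def tailFunctional (j : ℕ) : C₀(ℕ, ℝ) →L[ℝ] ℝ :=
  LinearMap.mkContinuous
    { toFun := fun x => ∑' i : ℕ, if j < i then (1 / 2 : ℝ) ^ (i + 1) * x i else 0
      map_add' := fun x y => by
        rw [← (summable_weightedTerm x j).tsum_add (summable_weightedTerm y j)]
        congr 1
        funext i
        split <;> simp [mul_add]
      map_smul' := fun a x => by
        rw [RingHom.id_apply, smul_eq_mul, ← tsum_mul_left]
        congr 1
        funext i
        split <;> simp only [coe_smul, Pi.smul_apply, smul_eq_mul, mul_zero]
        ring }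
    ((1 / 2) ^ (j + 1)) fun x =>
      tsum_of_norm_bounded ((hasSum_geometric_tail j).mul_right ‖x‖) (norm_weightedTerm_le x j)

lemma tailFunctional_apply (j : ℕ) (x : C₀(ℕ, ℝ)) :
    tailFunctional j x = ∑' i : ℕ, if j < i then (1 / 2 : ℝ) ^ (i + 1) * x i else 0 := rfl

lemma norm_tailFunctional_le (j : ℕ) : ‖tailFunctional j‖ ≤ (1 / 2) ^ (j + 1) :=
  LinearMap.mkContinuous_norm_le _ (by positivity) _

lemma tailFunctional_eq_add_succ (x : C₀(ℕ, ℝ)) (j : ℕ) :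
    tailFunctional j x = (1 / 2) ^ (j + 2) * x (j + 1) + tailFunctional (j + 1) x := by
  have h := (hasSum_ite_eq (j + 1) ((1 / 2 : ℝ) ^ (j + 2) * x (j + 1))).add
    (summable_weightedTerm x (j + 1)).hasSum
  rw [tailFunctional_apply, tailFunctional_apply, ← h.tsum_eq]
  congr 1
  funext i
  split_ifs <;> first | omega | subst_vars; simp

lemma tailFunctional_indicatorRange {j m : ℕ} (hjm : j < m) :
    tailFunctional j (indicatorRange m) = (1 / 2) ^ (j + 1) - (1 / 2) ^ m := by
  obtain ⟨k, rfl⟩ : ∃ k, m = k + 1 := ⟨m - 1, by omega⟩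
  rw [tailFunctional_apply, ← ((hasSum_geometric_tail j).sub (hasSum_geometric_tail k)).tsum_eq]
  congr 1
  funext i
  simp only [indicatorRange_apply]
  split_ifs <;> first | omega | simp

lemma tailFunctional_indicatorRange_of_le {j m : ℕ} (hmj : m ≤ j) :
    tailFunctional j (indicatorRange m) = 0 := by
  refine (tsum_congr fun i => ?_).trans tsum_zero
  simp only [indicatorRange_apply]
  split_ifs <;> first | omega | simp

noncomputable def coordFunctional (j : ℕ) : C₀(ℕ, ℝ) →L[ℝ] ℝ :=
  (1 / 2 : ℝ) ^ (j + 1) • evalCLM ℝ j - tailFunctional j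

lemma coordFunctional_apply (j : ℕ) (x : C₀(ℕ, ℝ)) :
    coordFunctional j x = (1 / 2) ^ (j + 1) * x j - tailFunctional j x := rfl

lemma norm_coordFunctional_le (j : ℕ) : ‖coordFunctional j‖ ≤ (1 / 2) ^ j := calc
  ‖coordFunctional j‖
      ≤ ‖(1 / 2 : ℝ) ^ (j + 1) • (evalCLM ℝ j : C₀(ℕ, ℝ) →L[ℝ] ℝ)‖ + ‖tailFunctional j‖ := by
    rw [coordFunctional]
    exact norm_sub_le (E := C₀(ℕ, ℝ) →L[ℝ] ℝ) _ _
  _ ≤ ‖(1 / 2 : ℝ) ^ (j + 1)‖ * ‖(evalCLM ℝ j : C₀(ℕ, ℝ) →L[ℝ] ℝ)‖ + ‖tailFunctional j‖ :=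
    add_le_add (ContinuousLinearMap.opNorm_smul_le _ _) le_rfl
  _ ≤ (1 / 2) ^ (j + 1) * 1 + (1 / 2) ^ (j + 1) := by
    rw [norm_pow, norm_div, norm_one, Real.norm_ofNat]
    gcongr
    exacts [norm_evalCLM_le ℝ j, norm_tailFunctional_le j]
  _ = (1 / 2) ^ j := by ring

lemma coordFunctional_indicatorRange (j m : ℕ) :
    coordFunctional j (indicatorRange m) = if j < m then (1 / 2) ^ m else 0 := by
  rw [coordFunctional_apply, indicatorRange_apply]
  split_ifs with h
  · rw [tailFunctional_indicatorRange h]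
    ring
  · rw [tailFunctional_indicatorRange_of_le (not_lt.mp h)]
    ring

lemma apply_succ_eq_of_coordFunctional_eq_zero {x : C₀(ℕ, ℝ)}
    (hx : ∀ j, coordFunctional j x = 0) (j : ℕ) : x (j + 1) = x j := by
  have hj := hx j
  have hj' := hx (j + 1)
  rw [coordFunctional_apply, sub_eq_zero] at hj hj'
  rw [tailFunctional_eq_add_succ, ← hj'] at hj
  have : (1 / 2 : ℝ) ^ (j + 1) * (x (j + 1) - x j) = 0 := by linear_combination -hj
  simpa [sub_eq_zero] using this

noncomputable def operator (p : ℝ≥0∞) [Fact (1 ≤ p)] : C₀(ℕ, ℝ) →L[ℝ] lp (fun _ : ℕ => ℝ) p :=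
  lp.coordsCLM coordFunctional lp.geometricTwo norm_coordFunctional_le

lemma eq_zero_of_operator_eq_zero {p : ℝ≥0∞} [Fact (1 ≤ p)] {x : C₀(ℕ, ℝ)}
    (hx : operator p x = 0) : x = 0 :=
  eq_zero_of_apply_succ_eq x <| apply_succ_eq_of_coordFunctional_eq_zero fun j =>
    congrArg (fun y : lp (fun _ : ℕ => ℝ) p => y j) hx

end MinModCounterexample

open MinModCounterexample ZeroAtInftyContinuousMap

theorem stmt13_general (p : ℝ≥0∞) [Fact (1 ≤ p)] :
    ∃ (T : C₀(ℕ, ℝ) →L[ℝ] lp (fun _ : ℕ => ℝ) p) (s : ℕ → C₀(ℕ, ℝ)),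
      (∀ (x : C₀(ℕ, ℝ)) (j : ℕ),
        (T x : ∀ i : ℕ, ℝ) j =
          (1/2 : ℝ) ^ (j + 1) * x j - ∑' i : ℕ, if j < i then (1/2 : ℝ) ^ (i + 1) * x i else 0) ∧
      (∀ m i : ℕ, s m i = if i < m then (1 : ℝ) else 0) ∧
      (∀ m : ℕ, ‖T (s (m + 1))‖ = ((m + 1 : ℝ)) ^ (1 / p.toReal) / 2 ^ (m + 1)) ∧
      minMod T = 0 ∧
      (∀ m : ℕ, ‖s (m + 1)‖ = 1) ∧
      Tendsto (fun m => ‖T (s (m + 1))‖) atTop (𝓝 (minMod T)) ∧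
      ¬ WeaklyNull (fun m => s (m + 1)) ∧
      (∀ x : C₀(ℕ, ℝ), ‖x‖ = 1 → T x ≠ 0) ∧
      ¬ AttainsMinMod T := by
  have hnorm (m : ℕ) : ‖operator p (indicatorRange (m + 1))‖
      = ((m + 1 : ℝ)) ^ (1 / p.toReal) / 2 ^ (m + 1) := by
    rw [lp.norm_eq_of_eq_indicator_range m.succ_ne_zero (by positivity) _
      fun j => coordFunctional_indicatorRange j (m + 1)]
    rw [Nat.cast_succ, one_div_pow, mul_one_div]
  have htend : Tendsto (fun m => ‖operator p (indicatorRange (m + 1))‖) atTop (𝓝 0) := by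
    simpa only [hnorm] using tendsto_rpow_div_two_pow (1 / p.toReal)
  have hmin : minMod (operator p) = 0 := minMod_eq_zero_of_tendsto norm_indicatorRange_succ htend
  have hker (x : C₀(ℕ, ℝ)) (hx : ‖x‖ = 1) : operator p x ≠ 0 := fun h => by
    simp [eq_zero_of_operator_eq_zero h] at hx
  refine ⟨operator p, indicatorRange, fun x j => rfl, fun m i => rfl, hnorm, hmin,
    norm_indicatorRange_succ, hmin ▸ htend, ?_, hker, not_attainsMinMod_of_minMod_eq_zero hmin hker⟩
  exact not_weaklyNull_of_apply_eq_one (evalCLM ℝ 0) fun m => by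
    rw [evalCLM_apply, indicatorRange_apply, if_pos m.succ_pos]

theorem stmt13 (p : ℝ≥0∞) [Fact (1 ≤ p)] (hp : p ≠ ⊤) :
    ∃ (T : C₀(ℕ, ℝ) →L[ℝ] lp (fun _ : ℕ => ℝ) p) (s : ℕ → C₀(ℕ, ℝ)),
      (∀ (x : C₀(ℕ, ℝ)) (j : ℕ),
        (T x : ∀ i : ℕ, ℝ) j =
          (1/2 : ℝ) ^ (j + 1) * x j - ∑' i : ℕ, if j < i then (1/2 : ℝ) ^ (i + 1) * x i else 0) ∧
      (∀ m i : ℕ, s m i = if i < m then (1 : ℝ) else 0) ∧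
      (∀ m : ℕ, ‖T (s (m + 1))‖ = ((m + 1 : ℝ)) ^ (1 / p.toReal) / 2 ^ (m + 1)) ∧
      minMod T = 0 ∧
      (∀ m : ℕ, ‖s (m + 1)‖ = 1) ∧
      Tendsto (fun m => ‖T (s (m + 1))‖) atTop (𝓝 (minMod T)) ∧
      ¬ WeaklyNull (fun m => s (m + 1)) ∧
      (∀ x : C₀(ℕ, ℝ), ‖x‖ = 1 → T x ≠ 0) ∧
      ¬ AttainsMinMod T :=
  stmt13_general p
end

section
/- The pair (ℓ_1, ℓ_1) does not have the compact perturbation property for minimum modulus: there exist T ∈ L(ℓ_1) and a rank-one (hence compact) K ∈ K(ℓ_1) such that T does not attain its minimum modulus, m(T) ≤ 1, and m(T + K) ≥ 3, so sup_{L ∈ K(ℓ_1)} m(T + L) > m(T). -/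
/-!
Index `ℓ¹ = ℓ¹(ℕ)` from `0`. The operator `T` sends `x` to `(0, ∑ cₙ xₙ, 3x₁, 3x₂, …)` with
`c₀ = -3/2` and `cₙ = 3(1 - 2^{-(n+1)})` for `n ≥ 1`, so `‖Tx‖ = |∑ cₙ xₙ| + 3 ∑_{n≥1} |xₙ|`.
Averaging the lower bounds `3 ∑_{n≥1} |xₙ|` and `(3/2)|x₀| + 3 ∑_{n≥1} 2^{-(n+1)} |xₙ|` with
weights `1/3, 2/3` gives `‖Tx‖ > ‖x‖` for `x ≠ 0`, while on `2(1 - 2^{-(n+1)}) e₀ + eₙ` the mixed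
coordinate vanishes, which forces `m(T) ≤ 1`. The rank-one `K` cancels `x₀` in the mixed
coordinate and writes `3x₀` into the unused coordinate `0`, so `‖(T + K)x‖ ≥ 3‖x‖`.
The supremum over compact perturbations is finite because, by Riesz's lemma, a compact operator
on an infinite-dimensional space is arbitrarily small on unit vectors, so `m(T + L) ≤ ‖T‖`.
-/

open Filter Topology

open scoped ENNReal

noncomputable def e1b (n : ℕ) : lp (fun _ : ℕ => ℝ) 1 := lp.single 1 n 1

section MinMod

variable {X Y : Type*} [NormedAddCommGroup X] [NormedSpace ℝ X]
  [NormedAddCommGroup Y] [NormedSpace ℝ Y]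

theorem minMod_le_norm_apply (T : X →L[ℝ] Y) {x : X} (hx : ‖x‖ = 1) : minMod T ≤ ‖T x‖ :=
  csInf_le ⟨0, fun _ ⟨_, _, hy⟩ => hy ▸ norm_nonneg _⟩ ⟨x, hx, rfl⟩

theorem minMod_le_norm_apply_div (T : X →L[ℝ] Y) {x : X} (hx : x ≠ 0) :
    minMod T ≤ ‖T x‖ / ‖x‖ := by
  have hx' : ‖x‖ ≠ 0 := norm_ne_zero_iff.mpr hx
  calc minMod T ≤ ‖T (‖x‖⁻¹ • x)‖ := minMod_le_norm_apply T (by simp [norm_smul, hx'])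
    _ = ‖T x‖ / ‖x‖ := by simp [norm_smul, div_eq_inv_mul]

theorem le_minMod [Nontrivial X] (T : X →L[ℝ] Y) {c : ℝ} (h : ∀ x, ‖x‖ = 1 → c ≤ ‖T x‖) :
    c ≤ minMod T := by
  obtain ⟨x₀, hx₀⟩ := exists_norm_eq X zero_le_one
  exact le_csInf ⟨_, x₀, hx₀, rfl⟩ fun _ ⟨x, hx, hr⟩ => hr ▸ h x hx

theorem IsCompactOperator.exists_norm_eq_one_norm_apply_lt (hX : ¬FiniteDimensional ℝ X)
    {L : X →L[ℝ] Y} (hL : IsCompactOperator L) {ε : ℝ} (hε : 0 < ε) :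
    ∃ x : X, ‖x‖ = 1 ∧ ‖L x‖ < ε := by
  obtain ⟨R, f, -, hfR, hf⟩ := exists_seq_norm_le_one_le_norm_sub hX
  obtain ⟨C, hC, hLC⟩ := hL.image_closedBall_subset_compact (f := (L : X →ₗ[ℝ] Y)) R
  have hmem : ∀ n, L (f n) ∈ C := fun n =>
    hLC ⟨f n, mem_closedBall_zero_iff.mpr (hfR n), rfl⟩
  obtain ⟨_, -, φ, hφ, hlim⟩ := hC.tendsto_subseq hmem
  obtain ⟨N, hN⟩ := Metric.cauchySeq_iff'.mp hlim.cauchySeq ε hε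
  set v := f (φ (N + 1)) - f (φ N)
  have hv : 1 ≤ ‖v‖ := hf (hφ.injective.ne (Nat.succ_ne_self N))
  have hLv : ‖L v‖ < ε := by
    simpa [v, dist_eq_norm] using hN (N + 1) (Nat.le_succ N)
  refine ⟨‖v‖⁻¹ • v, by simp [norm_smul, (one_pos.trans_le hv).ne'], ?_⟩
  calc ‖L (‖v‖⁻¹ • v)‖ = ‖v‖⁻¹ * ‖L v‖ := by simp [norm_smul]
    _ ≤ ‖L v‖ := mul_le_of_le_one_left (norm_nonneg _) (inv_le_one_of_one_le₀ hv)
    _ < ε := hLv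

theorem minMod_add_le_opNorm (hX : ¬FiniteDimensional ℝ X) (T : X →L[ℝ] Y)
    {L : X →L[ℝ] Y} (hL : IsCompactOperator L) : minMod (T + L) ≤ ‖T‖ := by
  refine le_of_forall_pos_lt_add fun ε hε => ?_
  obtain ⟨x, hx, hLx⟩ := hL.exists_norm_eq_one_norm_apply_lt hX hε
  calc minMod (T + L) ≤ ‖T x + L x‖ := minMod_le_norm_apply (T + L) hx
    _ ≤ ‖T x‖ + ‖L x‖ := norm_add_le _ _
    _ < ‖T‖ + ε := add_lt_add_of_le_of_lt (by simpa [hx] using T.le_opNorm x) hLx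

end MinMod

theorem lp.hasSum_norm_one {α : Type*} {E : α → Type*} [∀ i, NormedAddCommGroup (E i)]
    (f : lp E 1) : HasSum (fun i => ‖f i‖) ‖f‖ := by
  simpa using lp.hasSum_norm (by norm_num) f

namespace MinModCounterexample

noncomputable section

local notation "ℓ¹" => lp (fun _ : ℕ => ℝ) 1

theorem hasSum_abs (x : ℓ¹) : HasSum (fun n => |x n|) ‖x‖ := lp.hasSum_norm_one x

theorem summable_abs (x : ℓ¹) : Summable fun n => |x n| := (hasSum_abs x).summable

theorem summable_tail_abs (x : ℓ¹) : Summable fun n => |x (n + 1)| :=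
  (summable_nat_add_iff 1).mpr (summable_abs x)

theorem norm_eq_abs_add_tsum (x : ℓ¹) : ‖x‖ = |x 0| + ∑' n, |x (n + 1)| := by
  rw [← (hasSum_abs x).tsum_eq, (summable_abs x).tsum_eq_zero_add]

theorem norm_eq_abs_add_abs_add_tsum (x : ℓ¹) :
    ‖x‖ = |x 0| + |x 1| + ∑' n, |x (n + 2)| := by
  rw [norm_eq_abs_add_tsum, (summable_tail_abs x).tsum_eq_zero_add, add_assoc]

theorem e1b_apply (n k : ℕ) : e1b n k = if k = n then 1 else 0 := by
  simp [e1b, Pi.single_apply]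

theorem norm_e1b (n : ℕ) : ‖e1b n‖ = 1 := by
  rw [e1b, lp.norm_single one_pos, norm_one]

theorem norm_smul_e1b_zero_add_e1b_succ (a : ℝ) (n : ℕ) :
    ‖a • e1b 0 + e1b (n + 1)‖ = |a| + 1 := by
  rw [norm_eq_abs_add_tsum]
  simp only [lp.coeFn_add, lp.coeFn_smul, Pi.add_apply, Pi.smul_apply, e1b_apply]
  simp [apply_ite (abs : ℝ → ℝ)]

theorem not_finiteDimensional : ¬FiniteDimensional ℝ ℓ¹ := by
  intro
  refine Module.Finite.not_linearIndependent_of_infinite (R := ℝ) e1b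
    (LinearIndependent.of_comp (LinearMap.pi (lp.evalₗ _ 1)) ?_)
  exact Pi.linearIndependent_single_one ℕ ℝ

instance : Nontrivial ℓ¹ := nontrivial_of_ne (e1b 0) 0 (by simp [← norm_ne_zero_iff, norm_e1b])

def coeff (n : ℕ) : ℝ := if n = 0 then -(3 / 2) else 3 * (1 - (1 / 2) ^ (n + 1))

theorem abs_coeff_succ (n : ℕ) : |coeff (n + 1)| = 3 - 3 * (1 / 2) ^ (n + 2) := by
  have : (1 / 2 : ℝ) ^ (n + 2) ≤ 1 := pow_le_one₀ (by norm_num) (by norm_num)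
  rw [coeff, if_neg n.succ_ne_zero, abs_of_nonneg (by linarith)]
  ring

theorem abs_coeff_le (n : ℕ) : |coeff n| ≤ 3 := by
  rcases n with _ | n
  · norm_num [coeff, abs_of_nonneg]
  · rw [abs_coeff_succ]
    have : (0 : ℝ) ≤ (1 / 2) ^ (n + 2) := by positivity
    linarith

theorem summable_coeff_mul (x : ℓ¹) : Summable fun n => coeff n * x n :=
  .of_norm_bounded ((summable_abs x).mul_left 3) fun n => by
    rw [Real.norm_eq_abs, abs_mul]
    exact mul_le_mul_of_nonneg_right (abs_coeff_le n) (abs_nonneg _)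

def coordOne (x : ℓ¹) : ℝ := ∑' n, coeff n * x n

theorem coordOne_add (x y : ℓ¹) : coordOne (x + y) = coordOne x + coordOne y := by
  simp only [coordOne, lp.coeFn_add, Pi.add_apply, mul_add]
  exact (summable_coeff_mul x).tsum_add (summable_coeff_mul y)

theorem coordOne_smul (c : ℝ) (x : ℓ¹) : coordOne (c • x) = c * coordOne x := by
  simp only [coordOne, lp.coeFn_smul, Pi.smul_apply, smul_eq_mul, ← tsum_mul_left]
  exact tsum_congr fun n => by ring

theorem abs_coordOne_le (x : ℓ¹) : |coordOne x| ≤ 3 * ‖x‖ := by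
  rw [← (hasSum_abs x).tsum_eq, ← tsum_mul_left]
  refine (norm_tsum_le_tsum_norm (summable_coeff_mul x).norm).trans ?_
  refine (summable_coeff_mul x).norm.tsum_le_tsum (fun n => ?_) ((summable_abs x).mul_left 3)
  rw [Real.norm_eq_abs, abs_mul]
  exact mul_le_mul_of_nonneg_right (abs_coeff_le n) (abs_nonneg _)

theorem coordOne_e1b (n : ℕ) : coordOne (e1b n) = coeff n := by
  simp [coordOne, e1b_apply]

def tSeq (x : ℓ¹) : ℕ → ℝ
  | 0 => 0
  | 1 => coordOne x
  | k + 2 => 3 * x (k + 1)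

theorem memℓp_tSeq (x : ℓ¹) : Memℓp (tSeq x) 1 := by
  refine memℓp_gen ?_
  simp only [ENNReal.toReal_one, Real.rpow_one, Real.norm_eq_abs]
  refine (summable_nat_add_iff 2).mp ?_
  simpa [tSeq, abs_mul] using (summable_tail_abs x).mul_left 3

def tₗ : ℓ¹ →ₗ[ℝ] ℓ¹ where
  toFun x := ⟨tSeq x, memℓp_tSeq x⟩
  map_add' x y := by
    ext (_ | _ | k)
    · show (0 : ℝ) = 0 + 0
      simp
    · exact coordOne_add x y
    · show 3 * (x + y) (k + 1) = 3 * x (k + 1) + 3 * y (k + 1)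
      simp [mul_add]
  map_smul' c x := by
    ext (_ | _ | k)
    · simp [tSeq]
    · exact coordOne_smul c x
    · show 3 * (c • x) (k + 1) = c * (3 * x (k + 1))
      simp
      ring

theorem norm_tₗ_apply (x : ℓ¹) : ‖tₗ x‖ = |coordOne x| + 3 * ∑' n, |x (n + 1)| := by
  rw [norm_eq_abs_add_abs_add_tsum, ← tsum_mul_left]
  simp [tₗ, tSeq, abs_mul]

def T : ℓ¹ →L[ℝ] ℓ¹ :=
  tₗ.mkContinuous 6 fun x => by
    have h := norm_eq_abs_add_tsum x
    rw [norm_tₗ_apply]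
    linarith [abs_coordOne_le x, abs_nonneg (x 0)]

theorem norm_T_apply (x : ℓ¹) : ‖T x‖ = |coordOne x| + 3 * ∑' n, |x (n + 1)| :=
  norm_tₗ_apply x

theorem coe_T_apply (x : ℓ¹) : ⇑(T x) = tSeq x := rfl

theorem T_e1b_zero : T (e1b 0) = -(3 / 2 : ℝ) • e1b 1 := by
  ext (_ | _ | k) <;>
    simp only [coe_T_apply, lp.coeFn_smul, Pi.smul_apply, e1b_apply] <;>
    simp [tSeq, coordOne_e1b, coeff, e1b_apply]

theorem T_e1b_of_ne_zero {n : ℕ} (hn : n ≠ 0) :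
    T (e1b n) = (3 : ℝ) • ((1 - (1 / 2 : ℝ) ^ (n + 1)) • e1b 1 + e1b (n + 1)) := by
  ext (_ | _ | k) <;>
    simp only [coe_T_apply, lp.coeFn_smul, lp.coeFn_add, Pi.smul_apply, Pi.add_apply,
      e1b_apply] <;>
    simp [tSeq, coordOne_e1b, coeff, e1b_apply, hn]

def weight (x : ℓ¹) : ℝ := ∑' n, (1 / 2 : ℝ) ^ (n + 2) * |x (n + 1)|

theorem summable_weight (x : ℓ¹) : Summable fun n => (1 / 2 : ℝ) ^ (n + 2) * |x (n + 1)| :=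
  .of_nonneg_of_le (fun n => by positivity)
    (fun n => mul_le_of_le_one_left (abs_nonneg _) (pow_le_one₀ (by norm_num) (by norm_num)))
    (summable_tail_abs x)

theorem weight_nonneg (x : ℓ¹) : 0 ≤ weight x := tsum_nonneg fun n => by positivity

theorem weight_pos {x : ℓ¹} {n : ℕ} (hn : x (n + 1) ≠ 0) : 0 < weight x :=
  (summable_weight x).tsum_pos (fun n => by positivity) n (by positivity)

theorem abs_tail_coordOne_le (x : ℓ¹) :
    |∑' n, coeff (n + 1) * x (n + 1)| ≤ 3 * ∑' n, |x (n + 1)| - 3 * weight x := by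
  have hs : Summable fun n => coeff (n + 1) * x (n + 1) :=
    (summable_nat_add_iff 1).mpr (summable_coeff_mul x)
  calc |∑' n, coeff (n + 1) * x (n + 1)| ≤ ∑' n, |coeff (n + 1) * x (n + 1)| :=
        norm_tsum_le_tsum_norm hs.norm
    _ = ∑' n, (3 * |x (n + 1)| - 3 * ((1 / 2) ^ (n + 2) * |x (n + 1)|)) :=
        tsum_congr fun n => by rw [abs_mul, abs_coeff_succ]; ring
    _ = 3 * ∑' n, |x (n + 1)| - 3 * weight x := by
        rw [((summable_tail_abs x).mul_left 3).tsum_sub ((summable_weight x).mul_left 3),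
          tsum_mul_left, tsum_mul_left, weight]

theorem three_halves_mul_abs_add_weight_le (x : ℓ¹) :
    3 / 2 * |x 0| + 3 * weight x ≤ ‖T x‖ := by
  have hsplit : coordOne x = coeff 0 * x 0 + ∑' n, coeff (n + 1) * x (n + 1) :=
    (summable_coeff_mul x).tsum_eq_zero_add
  have h0 : |coeff 0 * x 0| = 3 / 2 * |x 0| := by norm_num [coeff, abs_mul]
  have := abs_sub_abs_le_abs_add (coeff 0 * x 0) (∑' n, coeff (n + 1) * x (n + 1))
  rw [norm_T_apply, hsplit]
  linarith [abs_tail_coordOne_le x]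

theorem norm_add_two_mul_weight_le (x : ℓ¹) : ‖x‖ + 2 * weight x ≤ ‖T x‖ := by
  have h₁ := three_halves_mul_abs_add_weight_le x
  have h₂ : 3 * ∑' n, |x (n + 1)| ≤ ‖T x‖ := by
    rw [norm_T_apply]
    linarith [abs_nonneg (coordOne x)]
  rw [norm_eq_abs_add_tsum]
  linarith

theorem norm_lt_norm_T_apply {x : ℓ¹} (hx : x ≠ 0) : ‖x‖ < ‖T x‖ := by
  by_cases htail : ∀ n, x (n + 1) = 0
  · have hnorm : ‖x‖ = |x 0| := by simp [norm_eq_abs_add_tsum, htail]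
    have hx0 : 0 < |x 0| := by
      rw [← hnorm]
      exact norm_pos_iff.mpr hx
    linarith [three_halves_mul_abs_add_weight_le x, weight_nonneg x]
  · obtain ⟨n, hn⟩ := not_forall.mp htail
    linarith [norm_add_two_mul_weight_le x, weight_pos hn]

theorem T_smul_e1b_zero_add_e1b_succ (n : ℕ) :
    T ((2 * (1 - (1 / 2 : ℝ) ^ (n + 2))) • e1b 0 + e1b (n + 1)) = (3 : ℝ) • e1b (n + 2) := by
  rw [map_add, map_smul, T_e1b_zero, T_e1b_of_ne_zero (by omega : n + 1 ≠ 0)]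
  module

theorem minMod_T_le (n : ℕ) : minMod T ≤ 3 / (3 - 2 * (1 / 2 : ℝ) ^ (n + 2)) := by
  have hε : (1 / 2 : ℝ) ^ (n + 2) ≤ 1 / 2 := pow_le_of_le_one (by norm_num) (by norm_num) (by omega)
  have hnorm := norm_smul_e1b_zero_add_e1b_succ (2 * (1 - (1 / 2 : ℝ) ^ (n + 2))) n
  rw [abs_of_pos (by linarith)] at hnorm
  have hne : (2 * (1 - (1 / 2 : ℝ) ^ (n + 2))) • e1b 0 + e1b (n + 1) ≠ 0 := by
    rw [← norm_pos_iff, hnorm]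
    linarith
  refine (minMod_le_norm_apply_div T hne).trans_eq ?_
  rw [T_smul_e1b_zero_add_e1b_succ, hnorm, norm_smul, norm_e1b]
  norm_num
  ring

theorem minMod_T_le_one : minMod T ≤ 1 := by
  have h : Tendsto (fun n : ℕ => 2 * (1 / 2 : ℝ) ^ (n + 2)) atTop (𝓝 0) := by
    simpa using ((tendsto_pow_atTop_nhds_zero_of_lt_one (r := (1 / 2 : ℝ)) (by norm_num)
      (by norm_num)).comp (tendsto_add_atTop_nat 2)).const_mul 2
  have hlim := (tendsto_const_nhds (x := (3 : ℝ))).div (tendsto_const_nhds.sub h)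
    (by norm_num : (3 : ℝ) - 0 ≠ 0)
  rw [sub_zero, div_self three_ne_zero] at hlim
  exact ge_of_tendsto' hlim minMod_T_le

theorem not_attainsMinMod_T : ¬AttainsMinMod T := by
  rintro ⟨x, hx, hTx⟩
  have := norm_lt_norm_T_apply (norm_ne_zero_iff.mp (hx.trans_ne one_ne_zero))
  linarith [minMod_T_le_one]

def K : ℓ¹ →L[ℝ] ℓ¹ :=
  (ContinuousLinearMap.toSpanSingleton ℝ ((3 / 2 : ℝ) • e1b 1 + (3 : ℝ) • e1b 0)).comp
    (lp.evalCLM ℝ (fun _ : ℕ => ℝ) 1 0)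

theorem K_apply (x : ℓ¹) : K x = x 0 • ((3 / 2 : ℝ) • e1b 1 + (3 : ℝ) • e1b 0) := rfl

theorem isCompactOperator_K : IsCompactOperator K :=
  (isCompactOperator_of_locallyCompactSpace_rng (ContinuousLinearMap.toSpanSingleton ℝ
    ((3 / 2 : ℝ) • e1b 1 + (3 : ℝ) • e1b 0))).comp_clm (lp.evalCLM ℝ (fun _ : ℕ => ℝ) 1 0)

theorem T_add_K_apply_zero (x : ℓ¹) : (T + K) x 0 = 3 * x 0 := by
  simp only [add_apply, K_apply, lp.coeFn_add, lp.coeFn_smul, Pi.add_apply,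
    Pi.smul_apply, coe_T_apply, e1b_apply]
  simp [tSeq, mul_comm]

theorem T_add_K_apply_add_two (x : ℓ¹) (k : ℕ) : (T + K) x (k + 2) = 3 * x (k + 1) := by
  simp only [add_apply, K_apply, lp.coeFn_add, lp.coeFn_smul, Pi.add_apply,
    Pi.smul_apply, coe_T_apply, e1b_apply]
  simp [tSeq]

theorem three_mul_norm_le_norm_T_add_K_apply (x : ℓ¹) : 3 * ‖x‖ ≤ ‖(T + K) x‖ := by
  have h3 : |(3 : ℝ)| = 3 := abs_of_pos three_pos
  have htail : ∑' k, |(T + K) x (k + 2)| = 3 * ∑' n, |x (n + 1)| := by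
    simp only [T_add_K_apply_add_two, abs_mul, tsum_mul_left, h3]
  rw [norm_eq_abs_add_abs_add_tsum ((T + K) x), norm_eq_abs_add_tsum x, T_add_K_apply_zero,
    abs_mul, h3, htail]
  linarith [abs_nonneg ((T + K) x 1)]

theorem three_le_minMod_T_add_K : 3 ≤ minMod (T + K) :=
  le_minMod _ fun x hx => by simpa [hx] using three_mul_norm_le_norm_T_add_K_apply x

end

end MinModCounterexample

theorem stmt16 :
    ∃ T K : lp (fun _ : ℕ => ℝ) 1 →L[ℝ] lp (fun _ : ℕ => ℝ) 1,
      T (e1b 0) = -(3/2 : ℝ) • e1b 1 ∧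
      (∀ n : ℕ, 1 ≤ n →
        T (e1b n) = (3 : ℝ) • ((1 - (1/2 : ℝ) ^ (n + 1)) • e1b 1 + e1b (n + 1))) ∧
      (∀ x : lp (fun _ : ℕ => ℝ) 1,
        K x = ((x : ∀ i : ℕ, ℝ) 0) • ((3/2 : ℝ) • e1b 1 + (3 : ℝ) • e1b 0)) ∧
      IsCompactOperator ⇑K ∧
      ¬ AttainsMinMod T ∧
      minMod T ≤ 1 ∧
      3 ≤ minMod (T + K) ∧
      minMod T <
        sSup {r : ℝ | ∃ L : lp (fun _ : ℕ => ℝ) 1 →L[ℝ] lp (fun _ : ℕ => ℝ) 1,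
          IsCompactOperator ⇑L ∧ r = minMod (T + L)} :=
  open MinModCounterexample in by
  have hbdd : BddAbove {r : ℝ | ∃ L : lp (fun _ : ℕ => ℝ) 1 →L[ℝ] lp (fun _ : ℕ => ℝ) 1,
      IsCompactOperator ⇑L ∧ r = minMod (T + L)} :=
    ⟨‖T‖, by rintro r ⟨L, hL, rfl⟩; exact minMod_add_le_opNorm not_finiteDimensional T hL⟩
  refine ⟨T, K, T_e1b_zero, fun n hn => T_e1b_of_ne_zero (by omega), K_apply,
    isCompactOperator_K, not_attainsMinMod_T, minMod_T_le_one, three_le_minMod_T_add_K, ?_⟩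
  calc minMod T ≤ 1 := minMod_T_le_one
    _ < 3 := by norm_num
    _ ≤ minMod (T + K) := three_le_minMod_T_add_K
    _ ≤ _ := le_csSup hbdd ⟨K, isCompactOperator_K, rfl⟩
end
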